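/- arXiv:1011.0070 — 2 statements merged into one kernel-verified Lean document; each statement's English description precedes it below -/
import Mathlib

section
/- Let c₁, c₂, c₃ ∈ ℝ with c₁c₃ ≠ 0. The lattice equation with polynomial E(w,x,y,z) = wy + c₁wx + c₃yz + c₂(wz + xy), i.e. u_{n,m}u_{n,m+1} + c₁u_{n,m}u_{n+1,m} + c₃u_{n,m+1}u_{n+1,m+1} + c₂(u_{n,m}u_{n+1,m+1} + u_{n+1,m}u_{n,m+1}) = 0, admits the five-point generalized symmetry with generator g_{n,m} = [c₂c₃c₁(u_{n,m+1}u_{n,m-1} + u_{n,m}²) + (1/2)(c₂² + c₃c₁)u_{n,m}(c₃u_{n,m+1} + c₁u_{n,m-1})]/(c₃u_{n,m+1} - c₁u_{n,m-1}): for every solution u : ℤ × ℤ → ℝ of the equation satisfying c₃u_{n,m+1} - c₁u_{n,m-1} ≠ 0 for all (n,m), and every (n,m) ∈ ℤ², the linearized equation g_{n,m}·∂₁E + g_{n+1,m}·∂₂E + g_{n,m+1}·∂₃E + g_{n+1,m+1}·∂₄E = 0 holds, where each ∂ᵢE is evaluated at (u_{n,m}, u_{n+1,m}, u_{n,m+1},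 u_{n+1,m+1}). -/
/-!
The linearized sum splits into the contribution `g_{n,m} ∂₁E + g_{n+1,m} ∂₂E` of the lower edge
of the square and the contribution `g_{n,m+1} ∂₃E + g_{n+1,m+1} ∂₄E` of the upper edge. Modulo the
equations on the square and on the one below it, the lower contribution equals an explicit
quadratic polynomial `K` in the four values on the square: it cannot depend on the solution below
the square, which varies independently of the solution above it. The reflection `m ↦ -m`, together with
`c₁ ↔ c₃`, preserves the equation and `K` but changes the sign of the generator, so the upper
contribution is `-K`.
-/

namespace QuadSymmetry

noncomputable section

def quad (c₁ c₂ c₃ w x y z : ℝ) : ℝ :=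
  w * y + c₁ * (w * x) + c₃ * (y * z) + c₂ * (w * z + x * y)

def symGen (c₁ c₂ c₃ uprev u unext : ℝ) : ℝ :=
  (c₂ * c₃ * c₁ * (unext * uprev + u ^ 2)
      + (1 / 2) * (c₂ ^ 2 + c₃ * c₁) * u * (c₃ * unext + c₁ * uprev)) /
    (c₃ * unext - c₁ * uprev)

-- `K`, read off from the lower contribution at the solution `w' = 0` of the equation below.
def symFlux (c₁ c₂ c₃ w x y z : ℝ) : ℝ :=
  -((c₂ ^ 2 + c₁ * c₃) / 2 * (c₁ * w * x + c₃ * y * z) + c₁ * c₂ * c₃ * (w * z + x * y))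

end

variable {c₁ c₂ c₃ : ℝ}

theorem quad_reflect (w x y z : ℝ) : quad c₃ c₂ c₁ y z w x = quad c₁ c₂ c₃ w x y z := by
  unfold quad; ring

theorem symGen_reflect (uprev u unext : ℝ) :
    symGen c₃ c₂ c₁ unext u uprev = -symGen c₁ c₂ c₃ uprev u unext := by
  rw [symGen, symGen, ← div_neg]
  congr 1 <;> ring

theorem symFlux_reflect (w x y z : ℝ) : symFlux c₃ c₂ c₁ y z w x = symFlux c₁ c₂ c₃ w x y z := by
  unfold symFlux; ring

theorem symGen_linearization_lower {w' x' w x y z : ℝ}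
    (hbelow : quad c₁ c₂ c₃ w' x' w x = 0) (h : quad c₁ c₂ c₃ w x y z = 0)
    (hw : c₃ * y - c₁ * w' ≠ 0) (hx : c₃ * z - c₁ * x' ≠ 0) :
    symGen c₁ c₂ c₃ w' w y * (y + c₁ * x + c₂ * z) + symGen c₁ c₂ c₃ x' x z * (c₁ * w + c₂ * y) =
      symFlux c₁ c₂ c₃ w x y z := by
  rw [symGen, symGen, div_mul_eq_mul_div _ (c₃ * y - c₁ * w'),
    div_mul_eq_mul_div _ (c₃ * z - c₁ * x'), div_add_div _ _ hw hx,
    div_eq_iff (mul_ne_zero hw hx), symFlux]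
  unfold quad at hbelow h
  linear_combination (-c₁ * c₃ * y * (c₂ * y + (c₂ ^ 2 - c₁ * c₃) * z)) * hbelow +
    (c₁ * c₂ * c₃ ^ 2 * (w * z + x * y) + (c₂ ^ 2 + c₁ * c₃) / 2 * (c₃ ^ 2 * y * z - c₁ ^ 2 * w' * x')
      + c₁ * c₂ * c₃ * (y * w' - c₁ * (w * x' + x * w'))
      + (c₂ ^ 2 - c₁ * c₃) / 2 * c₁ * c₃ * (y * x' + z * w')) * h

theorem symGen_linearization_upper {w x y z y' z' : ℝ}
    (h : quad c₁ c₂ c₃ w x y z = 0) (habove : quad c₁ c₂ c₃ y z y' z' = 0)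
    (hy : c₃ * y' - c₁ * w ≠ 0) (hz : c₃ * z' - c₁ * x ≠ 0) :
    symGen c₁ c₂ c₃ w y y' * (w + c₃ * z + c₂ * x) + symGen c₁ c₂ c₃ x z z' * (c₃ * y + c₂ * w) =
      -symFlux c₁ c₂ c₃ w x y z := by
  have hrefl := symGen_linearization_lower (c₁ := c₃) (c₂ := c₂) (c₃ := c₁)
    ((quad_reflect y z y' z').trans habove) ((quad_reflect w x y z).trans h)
    (by rwa [← neg_sub, neg_ne_zero]) (by rwa [← neg_sub, neg_ne_zero])
  rw [symGen_reflect (c₁ := c₁) (c₃ := c₃), symGen_reflect (c₁ := c₁) (c₃ := c₃),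
    symFlux_reflect] at hrefl
  linear_combination -hrefl

theorem symGen_linearization {w' x' w x y z y' z' : ℝ}
    (hbelow : quad c₁ c₂ c₃ w' x' w x = 0) (h : quad c₁ c₂ c₃ w x y z = 0)
    (habove : quad c₁ c₂ c₃ y z y' z' = 0)
    (hw : c₃ * y - c₁ * w' ≠ 0) (hx : c₃ * z - c₁ * x' ≠ 0)
    (hy : c₃ * y' - c₁ * w ≠ 0) (hz : c₃ * z' - c₁ * x ≠ 0) :
    symGen c₁ c₂ c₃ w' w y * (y + c₁ * x + c₂ * z) + symGen c₁ c₂ c₃ x' x z * (c₁ * w + c₂ * y)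
      + symGen c₁ c₂ c₃ w y y' * (w + c₃ * z + c₂ * x)
      + symGen c₁ c₂ c₃ x z z' * (c₃ * y + c₂ * w) = 0 := by
  linear_combination symGen_linearization_lower hbelow h hw hx +
    symGen_linearization_upper h habove hy hz

theorem deriv_eq_of_affine {f : ℝ → ℝ} {a : ℝ} (hf : ∀ t, f t = a * t + f 0) (s : ℝ) :
    deriv f s = a := by
  rw [funext hf]
  simp

section Deriv

variable (w x y z t : ℝ)

theorem deriv_quad_w : deriv (fun w => quad c₁ c₂ c₃ w x y z) t = y + c₁ * x + c₂ * z :=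
  deriv_eq_of_affine (fun _ => by simp only [quad]; ring) t

theorem deriv_quad_x : deriv (fun x => quad c₁ c₂ c₃ w x y z) t = c₁ * w + c₂ * y :=
  deriv_eq_of_affine (fun _ => by simp only [quad]; ring) t

theorem deriv_quad_y : deriv (fun y => quad c₁ c₂ c₃ w x y z) t = w + c₃ * z + c₂ * x :=
  deriv_eq_of_affine (fun _ => by simp only [quad]; ring) t

theorem deriv_quad_z : deriv (fun z => quad c₁ c₂ c₃ w x y z) t = c₃ * y + c₂ * w :=
  deriv_eq_of_affine (fun _ => by simp only [quad]; ring) t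

end Deriv

end QuadSymmetry

open QuadSymmetry in
theorem stmt_12_general
    (c₁ c₂ c₃ : ℝ)
    (E : ℝ → ℝ → ℝ → ℝ → ℝ)
    (hE : ∀ w x y z : ℝ, E w x y z = w * y + c₁ * (w * x) + c₃ * (y * z) + c₂ * (w * z + x * y))
    (u : ℤ × ℤ → ℝ)
    (hu : ∀ n m : ℤ, E (u (n, m)) (u (n + 1, m)) (u (n, m + 1)) (u (n + 1, m + 1)) = 0)
    (hne : ∀ n m : ℤ, c₃ * u (n, m + 1) - c₁ * u (n, m - 1) ≠ 0)
    (g : ℤ × ℤ → ℝ)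
    (hg : ∀ n m : ℤ, g (n, m) = (c₂ * c₃ * c₁ * (u (n, m + 1) * u (n, m - 1) + u (n, m) ^ 2) + (1 / 2) * (c₂ ^ 2 + c₃ * c₁) * u (n, m) * (c₃ * u (n, m + 1) + c₁ * u (n, m - 1))) / (c₃ * u (n, m + 1) - c₁ * u (n, m - 1)))
    (n m : ℤ) :
    g (n, m) * deriv (fun w => E w (u (n + 1, m)) (u (n, m + 1)) (u (n + 1, m + 1))) (u (n, m))
      + g (n + 1, m) * deriv (fun x => E (u (n, m)) x (u (n, m + 1)) (u (n + 1, m + 1))) (u (n + 1, m))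
      + g (n, m + 1) * deriv (fun y => E (u (n, m)) (u (n + 1, m)) y (u (n + 1, m + 1))) (u (n, m + 1))
      + g (n + 1, m + 1) * deriv (fun z => E (u (n, m)) (u (n + 1, m)) (u (n, m + 1)) z) (u (n + 1, m + 1)) = 0 := by
  obtain rfl : E = quad c₁ c₂ c₃ := by
    funext w x y z
    exact hE w x y z
  have hg' : ∀ n m, g (n, m) = symGen c₁ c₂ c₃ (u (n, m - 1)) (u (n, m)) (u (n, m + 1)) := hg
  have hbelow := hu n (m - 1)
  have hy := hne n (m + 1)
  have hz := hne (n + 1) (m + 1)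
  simp only [sub_add_cancel, add_sub_cancel_right] at hbelow hy hz
  rw [deriv_quad_w, deriv_quad_x, deriv_quad_y, deriv_quad_z, hg', hg', hg', hg']
  simp only [add_sub_cancel_right]
  exact symGen_linearization hbelow (hu n m) (hu n (m + 1)) (hne n m) (hne (n + 1) m) hy hz

theorem stmt_12
    (c₁ c₂ c₃ : ℝ) (h : c₁ * c₃ ≠ 0)
    (E : ℝ → ℝ → ℝ → ℝ → ℝ)
    (hE : ∀ w x y z : ℝ, E w x y z = w * y + c₁ * (w * x) + c₃ * (y * z) + c₂ * (w * z + x * y))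
    (u : ℤ × ℤ → ℝ)
    (hu : ∀ n m : ℤ, E (u (n, m)) (u (n + 1, m)) (u (n, m + 1)) (u (n + 1, m + 1)) = 0)
    (hne : ∀ n m : ℤ, c₃ * u (n, m + 1) - c₁ * u (n, m - 1) ≠ 0)
    (g : ℤ × ℤ → ℝ)
    (hg : ∀ n m : ℤ, g (n, m) = (c₂ * c₃ * c₁ * (u (n, m + 1) * u (n, m - 1) + u (n, m) ^ 2) + (1 / 2) * (c₂ ^ 2 + c₃ * c₁) * u (n, m) * (c₃ * u (n, m + 1) + c₁ * u (n, m - 1))) / (c₃ * u (n, m + 1) - c₁ * u (n, m - 1)))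
    (n m : ℤ) :
    g (n, m) * deriv (fun w => E w (u (n + 1, m)) (u (n, m + 1)) (u (n + 1, m + 1))) (u (n, m))
      + g (n + 1, m) * deriv (fun x => E (u (n, m)) x (u (n, m + 1)) (u (n + 1, m + 1))) (u (n + 1, m))
      + g (n, m + 1) * deriv (fun y => E (u (n, m)) (u (n + 1, m)) y (u (n + 1, m + 1))) (u (n, m + 1))
      + g (n + 1, m + 1) * deriv (fun z => E (u (n, m)) (u (n + 1, m)) (u (n, m + 1)) z) (u (n + 1, m + 1)) = 0 :=
  stmt_12_general c₁ c₂ c₃ E hE u hu hne g hg n m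
end

section
/- Let c₁, c₂ ∈ ℝ with c₁c₂ ≠ 0 and c₃ = 0. The lattice equation with polynomial E(w,x,y,z) = wy + c₁wx + c₂(wz + xy), i.e. u_{n,m}u_{n,m+1} + c₁u_{n,m}u_{n+1,m} + c₂(u_{n,m}u_{n+1,m+1} + u_{n+1,m}u_{n,m+1}) = 0, admits the five-point generalized symmetry with generator g_{n,m} = (u_{n,m+1} + u_{n,m}·c₁/c₂)(u_{n,m}/u_{n,m-1} + c₁/c₂): for every solution u : ℤ × ℤ → ℝ of the equation satisfying u_{n,m} ≠ 0 for all (n,m), and every (n,m) ∈ ℤ², the linearized equation g_{n,m}·∂₁E + g_{n+1,m}·∂₂E + g_{n,m+1}·∂₃E + g_{n+1,m+1}·∂₄E = 0 holds, where each ∂ᵢE is evaluated at (u_{n,m}, u_{n+1,m}, u_{n,m+1}, u_{n+1,m+1}). -/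
/-!
On a solution, each quad equation `E(w, x, y, z) = 0` is linear in its last corner, so the
equations on the quads `(n, m)` and `(n, m + 1)` express `u (n + 1, m + 1)` and
`u (n + 1, m + 2)` through the remaining values. After this elimination the linearized
expression becomes an explicit multiple of `E` on the quad `(n, m - 1)`, which vanishes too.
-/

def quadPoly {R : Type*} [CommRing R] (c₁ c₂ w x y z : R) : R :=
  w * y + c₁ * (w * x) + c₂ * (w * z + x * y)

section
variable {𝕜 : Type*} [NontriviallyNormedField 𝕜] (c₁ c₂ : 𝕜)

lemma deriv_quadPoly_fst (w x y z : 𝕜) :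
    deriv (fun t => quadPoly c₁ c₂ t x y z) w = y + c₁ * x + c₂ * z := by
  unfold quadPoly
  rw [deriv_fun_add (by fun_prop) (by fun_prop), deriv_fun_add (by fun_prop) (by fun_prop)]
  simp

lemma deriv_quadPoly_snd (w x y z : 𝕜) :
    deriv (fun t => quadPoly c₁ c₂ w t y z) x = c₁ * w + c₂ * y := by
  unfold quadPoly
  rw [deriv_fun_add (by fun_prop) (by fun_prop), deriv_fun_add (by fun_prop) (by fun_prop)]
  simp

lemma deriv_quadPoly_thd (w x y z : 𝕜) :
    deriv (fun t => quadPoly c₁ c₂ w x t z) y = w + c₂ * x := by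
  unfold quadPoly
  rw [deriv_fun_add (by fun_prop) (by fun_prop), deriv_fun_add (by fun_prop) (by fun_prop)]
  simp

lemma deriv_quadPoly_fth (w x y z : 𝕜) :
    deriv (fun t => quadPoly c₁ c₂ w x y t) z = c₂ * w := by
  unfold quadPoly
  simp

end

/-- The linearized expression at the quad with corners `w, x, y, z`, where `a, b` lie one step
below `w, x` and `p, q` one step above `y, z`. -/
lemma linearized_eq_mul_quadPoly {K : Type*} [Field K] {c₁ c₂ : K} (hc₂ : c₂ ≠ 0)
    {a b w x y z p q : K} (ha : a ≠ 0) (hb : b ≠ 0) (hw : w ≠ 0) (hx : x ≠ 0) (hy : y ≠ 0)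
    (hwxyz : quadPoly c₁ c₂ w x y z = 0) (hyzpq : quadPoly c₁ c₂ y z p q = 0) :
    (y + w * (c₁ / c₂)) * (w / a + c₁ / c₂) * (y + c₁ * x + c₂ * z)
      + (z + x * (c₁ / c₂)) * (x / b + c₁ / c₂) * (c₁ * w + c₂ * y)
      + (p + y * (c₁ / c₂)) * (y / w + c₁ / c₂) * (w + c₂ * x)
      + (q + z * (c₁ / c₂)) * (z / x + c₁ / c₂) * (c₂ * w)
      = -(x * y * (y + w * (c₁ / c₂))) / (w * a * b) * quadPoly c₁ c₂ a b w x := by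
  unfold quadPoly at *
  have hq : q = -(y * p + c₁ * (y * z) + c₂ * (z * p)) / (c₂ * y) := by
    field_simp
    linear_combination hyzpq
  have hz : z = -(w * y + c₁ * (w * x) + c₂ * (x * y)) / (c₂ * w) := by
    field_simp
    linear_combination hwxyz
  subst hq hz
  field_simp
  ring

theorem stmt_13
    (c₁ c₂ : ℝ) (h : c₁ * c₂ ≠ 0)
    (E : ℝ → ℝ → ℝ → ℝ → ℝ)
    (hE : ∀ w x y z : ℝ, E w x y z = w * y + c₁ * (w * x) + c₂ * (w * z + x * y))
    (u : ℤ × ℤ → ℝ)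
    (hu : ∀ n m : ℤ, E (u (n, m)) (u (n + 1, m)) (u (n, m + 1)) (u (n + 1, m + 1)) = 0)
    (hne : ∀ n m : ℤ, u (n, m) ≠ 0)
    (g : ℤ × ℤ → ℝ)
    (hg : ∀ n m : ℤ, g (n, m) = (u (n, m + 1) + u (n, m) * (c₁ / c₂)) * (u (n, m) / u (n, m - 1) + c₁ / c₂))
    (n m : ℤ) :
    g (n, m) * deriv (fun w => E w (u (n + 1, m)) (u (n, m + 1)) (u (n + 1, m + 1))) (u (n, m))
      + g (n + 1, m) * deriv (fun x => E (u (n, m)) x (u (n, m + 1)) (u (n + 1, m + 1))) (u (n + 1, m))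
      + g (n, m + 1) * deriv (fun y => E (u (n, m)) (u (n + 1, m)) y (u (n + 1, m + 1))) (u (n, m + 1))
      + g (n + 1, m + 1) * deriv (fun z => E (u (n, m)) (u (n + 1, m)) (u (n, m + 1)) z) (u (n + 1, m + 1)) = 0 := by
  have hc₂ : c₂ ≠ 0 := right_ne_zero_of_mul h
  obtain rfl : E = quadPoly c₁ c₂ := funext₂ fun w x => funext₂ fun y z => hE w x y z
  have hbelow := hu n (m - 1)
  rw [sub_add_cancel] at hbelow
  rw [deriv_quadPoly_fst, deriv_quadPoly_snd, deriv_quadPoly_thd, deriv_quadPoly_fth,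
    hg n m, hg (n + 1) m, hg n (m + 1), hg (n + 1) (m + 1), add_sub_cancel_right,
    linearized_eq_mul_quadPoly hc₂ (hne n (m - 1)) (hne (n + 1) (m - 1)) (hne n m)
      (hne (n + 1) m) (hne n (m + 1)) (hu n m) (hu n (m + 1)), hbelow, mul_zero]
end
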